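/- (Reverse triangle inequality for pivots) Let P, Q and T be trajectories in V and t a time interval with |t| > 0 and t ⊆ I(P). Then |Dist(Q,P,t) − Dist(P,T,t)| ≤ Dist(Q,T,t). -/

import Mathlib

open MeasureTheory

/-- A trajectory in `V`: a nonempty list of (vertex, interval start, interval end) triples,
with integer endpoints `a < b`, consecutive intervals sharing endpoints, and consecutive
vertices distinct. -/
structure Traj (V : Type*) where
  steps : List (V × ℤ × ℤ)
  nonempty : steps ≠ []
  valid : ∀ p ∈ steps, p.2.1 < p.2.2
  chain : steps.Chain' (fun p q => p.2.2 = q.2.1 ∧ p.1 ≠ q.1)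

/-- Length (Lebesgue measure) of a set of times. -/
noncomputable def ilen (A : Set ℝ) : ℝ := (volume A).toReal

/-- The time interval of a single trajectory step. -/
def stepInt {V : Type*} (p : V × ℤ × ℤ) : Set ℝ := Set.Icc (p.2.1 : ℝ) (p.2.2 : ℝ)

/-- The total interval `I(T)` of a trajectory: from its starting time to its ending time. -/
noncomputable def totalInt {V : Type*} (T : Traj V) : Set ℝ :=
  Set.Icc (((T.steps.head T.nonempty).2.1 : ℝ)) (((T.steps.getLast T.nonempty).2.2 : ℝ))

/-- The spatio-temporal similarity `Sim(Q,T,s)`. -/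
noncomputable def Sim {V : Type*} [MetricSpace V] (Q T : Traj V) (s : Set ℝ) : ℝ :=
  (1 / ilen s) *
    (Q.steps.map (fun q =>
      (T.steps.map (fun p =>
        ilen (s ∩ stepInt p ∩ stepInt q) * Real.exp (-(dist p.1 q.1)))).sum)).sum

/-- The spatio-temporal distance `Dist(Q,T,s) = 1 - Sim(Q,T,s)`. -/
noncomputable def TrajDist {V : Type*} [MetricSpace V] (Q T : Traj V) (s : Set ℝ) : ℝ :=
  1 - Sim Q T s

/-! Since `P` covers `t`, almost every instant of `t` lies in exactly one step of `P` and in at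
most one step of each of `Q` and `T`. At an instant where the three trajectories sit at `p`, `q`,
`r`, the weights satisfy `e^{-d(p,r)} + e^{-d(q,r)} ≤ 1 + e^{-d(p,q)}`, because
`(1 - e^{-d(p,r)})(1 - e^{-d(q,r)}) ≥ 0` and `d(p,q) ≤ d(p,r) + d(q,r)`; where `Q` or `T` is
absent, `e^{-d} ≤ 1` suffices. Summing over the triple overlaps of steps gives
`Sim(P,T) + Sim(Q,T) ≤ 1 + Sim(P,Q)`, and this inequality together with its instance with `Q` and
`T` exchanged is the claimed two-sided bound, as `Sim` is symmetric. -/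

open Set Function Real
open scoped ENNReal

theorem Icc_head_getLast_subset_biUnion_stepInt {V : Type*} {l : List (V × ℤ × ℤ)} (hl : l ≠ [])
    (hc : l.IsChain fun p q => p.2.2 = q.2.1) :
    Icc ((l.head hl).2.1 : ℝ) (l.getLast hl).2.2 ⊆ ⋃ p ∈ l, stepInt p := by
  induction hc with
  | nil => exact absurd rfl hl
  | singleton a => simp [stepInt]
  | @cons_cons a b l hab _ ih =>
    intro x hx
    rcases le_or_gt x a.2.2 with hxa | hxa
    · exact mem_biUnion List.mem_cons_self ⟨hx.1, hxa⟩
    · have hx' : x ∈ Icc (((b :: l).head (List.cons_ne_nil _ _)).2.1 : ℝ)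
          ((b :: l).getLast (List.cons_ne_nil _ _)).2.2 :=
        ⟨by simpa [← hab] using hxa.le, by simpa using hx.2⟩
      obtain ⟨p, hp, hxp⟩ := mem_iUnion₂.mp (ih _ hx')
      exact mem_biUnion (List.mem_cons_of_mem _ hp) hxp

namespace Traj

variable {V : Type*}

theorem totalInt_subset_iUnion_stepInt (X : Traj V) :
    totalInt X ⊆ ⋃ i : Fin X.steps.length, stepInt X.steps[i] := by
  intro x hx
  obtain ⟨p, hp, hxp⟩ := mem_iUnion₂.mp <|
    Icc_head_getLast_subset_biUnion_stepInt X.nonempty (X.chain.imp fun _ _ h => h.1) hx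
  obtain ⟨i, hi, rfl⟩ := List.getElem_of_mem hp
  exact mem_iUnion.mpr ⟨⟨i, hi⟩, hxp⟩

theorem pairwise_end_le_start (X : Traj V) : X.steps.Pairwise fun p q => p.2.2 ≤ q.2.1 := by
  let R : V × ℤ × ℤ → V × ℤ × ℤ → Prop := fun p q => p.2.1 < p.2.2 ∧ p.2.2 ≤ q.2.1
  have : Trans R R R := ⟨fun hpq hqr => ⟨hpq.1, hpq.2.trans (hqr.1.trans_le hqr.2).le⟩⟩
  have hR : X.steps.IsChain R :=
    List.IsChain.imp_of_mem_imp (fun p _ hp _ h => ⟨X.valid p hp, h.1.le⟩) X.chain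
  exact hR.pairwise.imp And.right

theorem aedisjoint_stepInt (X : Traj V) :
    Pairwise (AEDisjoint volume on (fun i : Fin X.steps.length => stepInt X.steps[i])) := by
  have hlt : ∀ i j : Fin X.steps.length, i < j →
      AEDisjoint volume (stepInt X.steps[i]) (stepInt X.steps[j]) := by
    intro i j hij
    have hle : (X.steps[i].2.2 : ℝ) ≤ X.steps[j].2.1 := by
      exact_mod_cast List.pairwise_iff_getElem.mp X.pairwise_end_le_start i j i.2 j.2 hij
    refine measure_mono_null (t := {(X.steps[i].2.2 : ℝ)}) ?_ Real.volume_singleton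
    rintro x ⟨⟨-, hxi⟩, ⟨hxj, -⟩⟩
    exact le_antisymm hxi (hle.trans hxj)
  intro i j hij
  rcases hij.lt_or_gt with h | h
  exacts [hlt i j h, (hlt j i h).symm]

end Traj

section Overlap

variable {α ι κ τ : Type*} [MeasurableSpace α] {μ : Measure α}
  [Fintype ι] [Fintype κ] [Fintype τ]

theorem sum_measureReal_inter_eq {A : ι → Set α} (hA : Pairwise (AEDisjoint μ on A))
    (hAm : ∀ i, NullMeasurableSet (A i) μ) {S : Set α} (hSm : NullMeasurableSet S μ)
    (hS : μ S ≠ ∞) : ∑ i, μ.real (S ∩ A i) = μ.real (S ∩ ⋃ i, A i) := by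
  have hd : Pairwise (AEDisjoint μ on fun i => S ∩ A i) := fun i j hij =>
    (hA hij).mono inter_subset_right inter_subset_right
  rw [inter_iUnion, measureReal_def, measure_iUnion₀ hd fun i => hSm.inter (hAm i),
    tsum_fintype, ENNReal.toReal_sum fun i _ => measure_ne_top_of_subset inter_subset_left hS]
  rfl

theorem sum_measureReal_inter_le {A : ι → Set α} (hA : Pairwise (AEDisjoint μ on A))
    (hAm : ∀ i, NullMeasurableSet (A i) μ) {S : Set α} (hSm : NullMeasurableSet S μ)
    (hS : μ S ≠ ∞) : ∑ i, μ.real (S ∩ A i) ≤ μ.real S :=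
  (sum_measureReal_inter_eq hA hAm hSm hS).trans_le (measureReal_mono inter_subset_left hS)

theorem sum_measureReal_inter_of_subset {A : ι → Set α} (hA : Pairwise (AEDisjoint μ on A))
    (hAm : ∀ i, NullMeasurableSet (A i) μ) {S : Set α} (hSm : NullMeasurableSet S μ)
    (hS : μ S ≠ ∞) (hSA : S ⊆ ⋃ i, A i) : ∑ i, μ.real (S ∩ A i) = μ.real S := by
  rw [sum_measureReal_inter_eq hA hAm hSm hS, inter_eq_left.mpr hSA]

theorem sum_measureReal_inter_mul_add_le {s : Set α} (hsm : NullMeasurableSet s μ)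
    (hs : μ s ≠ ∞) {A : ι → Set α} {B : κ → Set α} {C : τ → Set α}
    (hA : Pairwise (AEDisjoint μ on A)) (hB : Pairwise (AEDisjoint μ on B))
    (hC : Pairwise (AEDisjoint μ on C)) (hAm : ∀ i, NullMeasurableSet (A i) μ)
    (hBm : ∀ j, NullMeasurableSet (B j) μ) (hCm : ∀ k, NullMeasurableSet (C k) μ)
    (hsA : s ⊆ ⋃ i, A i) {wAC : ι → τ → ℝ} {wBC : κ → τ → ℝ} {wAB : ι → κ → ℝ}
    (hwAC : ∀ i k, wAC i k ≤ 1) (hwAB : ∀ i j, 0 ≤ wAB i j)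
    (hw : ∀ i j k, wAC i k + wBC j k ≤ 1 + wAB i j) :
    ∑ i, ∑ k, μ.real (s ∩ A i ∩ C k) * wAC i k + ∑ j, ∑ k, μ.real (s ∩ B j ∩ C k) * wBC j k ≤
      μ.real s + ∑ i, ∑ j, μ.real (s ∩ A i ∩ B j) * wAB i j := by
  have hfin : ∀ t ⊆ s, μ t ≠ ∞ := fun t ht => measure_ne_top_of_subset ht hs
  set m : ι → κ → τ → ℝ := fun i j k => μ.real (s ∩ A i ∩ B j ∩ C k)
  have hBC : ∀ j k, μ.real (s ∩ B j ∩ C k) = ∑ i, m i j k := fun j k => by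
    rw [← sum_measureReal_inter_of_subset hA hAm ((hsm.inter (hBm j)).inter (hCm k))
      (hfin _ (inter_subset_left.trans inter_subset_left))
      ((inter_subset_left.trans inter_subset_left).trans hsA)]
    simp only [m, inter_right_comm _ (A _)]
  have hAB : ∀ i j, ∑ k, m i j k ≤ μ.real (s ∩ A i ∩ B j) := fun i j =>
    sum_measureReal_inter_le hC hCm ((hsm.inter (hAm i)).inter (hBm j))
      (hfin _ (inter_subset_left.trans inter_subset_left))
  have hAC : ∀ i k, ∑ j, m i j k ≤ μ.real (s ∩ A i ∩ C k) := fun i k => by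
    simp only [m, inter_right_comm _ (B _)]
    exact sum_measureReal_inter_le hB hBm ((hsm.inter (hAm i)).inter (hCm k))
      (hfin _ (inter_subset_left.trans inter_subset_left))
  have hs_AC : ∑ i, ∑ k, μ.real (s ∩ A i ∩ C k) ≤ μ.real s :=
    calc ∑ i, ∑ k, μ.real (s ∩ A i ∩ C k) ≤ ∑ i, μ.real (s ∩ A i) :=
          Finset.sum_le_sum fun i _ => sum_measureReal_inter_le hC hCm (hsm.inter (hAm i))
            (hfin _ inter_subset_left)
      _ = μ.real s := sum_measureReal_inter_of_subset hA hAm hsm hs hsA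
  -- The part of `s ∩ A i ∩ C k` missed by every `B j` contributes at most its measure, as `wAC ≤ 1`.
  have hstep : ∀ i k, μ.real (s ∩ A i ∩ C k) * wAC i k + ∑ j, m i j k * wBC j k ≤
      μ.real (s ∩ A i ∩ C k) + ∑ j, m i j k * wAB i j := fun i k => by
    have hcov : μ.real (s ∩ A i ∩ C k) * wAC i k ≤
        μ.real (s ∩ A i ∩ C k) + (∑ j, m i j k) * (wAC i k - 1) := by
      nlinarith [hAC i k, hwAC i k]
    have hpt : ∑ j, m i j k * (wAC i k - 1) + ∑ j, m i j k * wBC j k ≤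
        ∑ j, m i j k * wAB i j := by
      rw [← Finset.sum_add_distrib]
      exact Finset.sum_le_sum fun j _ => by
        nlinarith [hw i j k, measureReal_nonneg (μ := μ) (s := s ∩ A i ∩ B j ∩ C k)]
    rw [Finset.sum_mul] at hcov
    linarith
  calc _ = ∑ i, ∑ k, (μ.real (s ∩ A i ∩ C k) * wAC i k + ∑ j, m i j k * wBC j k) := by
        simp only [hBC, Finset.sum_mul, Finset.sum_add_distrib]
        exact congrArg _ <| Finset.sum_comm.trans <|
          (Finset.sum_congr rfl fun _ _ => Finset.sum_comm).trans Finset.sum_comm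
    _ ≤ ∑ i, ∑ k, (μ.real (s ∩ A i ∩ C k) + ∑ j, m i j k * wAB i j) :=
        Finset.sum_le_sum fun i _ => Finset.sum_le_sum fun k _ => hstep i k
    _ = ∑ i, ∑ k, μ.real (s ∩ A i ∩ C k) + ∑ i, ∑ j, (∑ k, m i j k) * wAB i j := by
        simp only [Finset.sum_add_distrib, Finset.sum_mul]
        rw [Finset.sum_congr rfl fun i _ => Finset.sum_comm (γ := τ)]
    _ ≤ μ.real s + ∑ i, ∑ j, μ.real (s ∩ A i ∩ B j) * wAB i j := by
        gcongr with i _ j _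
        · exact hwAB i j
        · exact hAB i j

end Overlap

theorem exp_neg_dist_add_exp_neg_dist_le {V : Type*} [PseudoMetricSpace V] (x y z : V) :
    exp (-dist x z) + exp (-dist y z) ≤ 1 + exp (-dist x y) := by
  have hx : exp (-dist x z) ≤ 1 := exp_le_one_iff.mpr (neg_nonpos.mpr dist_nonneg)
  have hy : exp (-dist y z) ≤ 1 := exp_le_one_iff.mpr (neg_nonpos.mpr dist_nonneg)
  have hxy : exp (-dist x z) * exp (-dist y z) ≤ exp (-dist x y) := by
    rw [← exp_add]
    exact exp_le_exp.mpr (by linarith [dist_triangle_right x y z])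
  nlinarith [mul_nonneg (sub_nonneg.mpr hx) (sub_nonneg.mpr hy)]

section Similarity

variable {V : Type*} [MetricSpace V]

theorem sim_eq_sum (X Y : Traj V) (s : Set ℝ) :
    Sim X Y s = 1 / volume.real s * ∑ i : Fin X.steps.length, ∑ j : Fin Y.steps.length,
      volume.real (s ∩ stepInt X.steps[i] ∩ stepInt Y.steps[j]) *
        exp (-dist X.steps[i].1 Y.steps[j].1) := by
  simp only [Sim, ilen, ← measureReal_def, ← Fin.sum_univ_fun_getElem]
  congr 1
  refine Finset.sum_congr rfl fun i _ => Finset.sum_congr rfl fun j _ => ?_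
  rw [inter_right_comm, dist_comm]
  rfl

theorem sim_comm (X Y : Traj V) (s : Set ℝ) : Sim X Y s = Sim Y X s := by
  rw [sim_eq_sum, sim_eq_sum, Finset.sum_comm]
  congr 1
  refine Finset.sum_congr rfl fun j _ => Finset.sum_congr rfl fun i _ => ?_
  rw [inter_right_comm, dist_comm]

theorem sim_add_sim_le (P Q T : Traj V) {s : Set ℝ} (hs : MeasurableSet s)
    (hsP : s ⊆ totalInt P) : Sim P T s + Sim Q T s ≤ 1 + Sim P Q s := by
  have hfin : volume s ≠ ∞ := measure_ne_top_of_subset hsP isCompact_Icc.measure_ne_top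
  have key := sum_measureReal_inter_mul_add_le hs.nullMeasurableSet hfin
    P.aedisjoint_stepInt Q.aedisjoint_stepInt T.aedisjoint_stepInt
    (fun _ => measurableSet_Icc.nullMeasurableSet) (fun _ => measurableSet_Icc.nullMeasurableSet)
    (fun _ => measurableSet_Icc.nullMeasurableSet) (hsP.trans P.totalInt_subset_iUnion_stepInt)
    (wAC := fun i k => exp (-dist P.steps[i].1 T.steps[k].1))
    (wBC := fun j k => exp (-dist Q.steps[j].1 T.steps[k].1))
    (wAB := fun i j => exp (-dist P.steps[i].1 Q.steps[j].1))
    (fun _ _ => exp_le_one_iff.mpr (neg_nonpos.mpr dist_nonneg)) (fun _ _ => (exp_pos _).le)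
    (fun _ _ _ => exp_neg_dist_add_exp_neg_dist_le _ _ _)
  have hL : 0 ≤ 1 / volume.real s := one_div_nonneg.mpr measureReal_nonneg
  -- Only `≤`: for `volume.real s = 0` the left side is `1 / 0 * 0 = 0`.
  have hLs : 1 / volume.real s * volume.real s ≤ 1 := by
    rw [one_div_mul_eq_div]
    exact div_self_le_one _
  have hscaled := mul_le_mul_of_nonneg_left key hL
  rw [mul_add, mul_add] at hscaled
  rw [sim_eq_sum, sim_eq_sum, sim_eq_sum]
  linarith

end Similarity

theorem trajDist_reverse_triangle_general {V : Type*} [MetricSpace V] (P Q T : Traj V)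
    (a b : ℤ) (ht : Set.Icc (a : ℝ) b ⊆ totalInt P) :
    |TrajDist Q P (Set.Icc (a : ℝ) b) - TrajDist P T (Set.Icc (a : ℝ) b)| ≤
      TrajDist Q T (Set.Icc (a : ℝ) b) := by
  have h₁ := sim_add_sim_le P Q T measurableSet_Icc ht
  have h₂ := sim_add_sim_le P T Q measurableSet_Icc ht
  rw [sim_comm P Q] at h₁ h₂
  rw [sim_comm T Q] at h₂
  simp only [TrajDist]
  exact abs_sub_le_iff.mpr ⟨by linarith, by linarith⟩

/-- Reverse triangle inequality for pivots: Let `P`, `Q` and `T` be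
trajectories in `V` and `t` a time interval with `|t| > 0` and `t ⊆ I(P)`. Then
`|Dist(Q,P,t) − Dist(P,T,t)| ≤ Dist(Q,T,t)`. -/
theorem trajDist_reverse_triangle {V : Type*} [MetricSpace V] (P Q T : Traj V)
    (a b : ℤ) (hab : a < b) (ht : Set.Icc (a : ℝ) b ⊆ totalInt P) :
    |TrajDist Q P (Set.Icc (a : ℝ) b) - TrajDist P T (Set.Icc (a : ℝ) b)| ≤
      TrajDist Q T (Set.Icc (a : ℝ) b) :=
  trajDist_reverse_triangle_general P Q T a b ht
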